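/- Let K₁(f, δ) = inf over continuously differentiable g with g, g' bounded of (‖f - g‖ + δ ‖g'‖), in sup norm. Then for every bounded continuous f : ℝ → ℝ and δ > 0: (1/36) K₁(f, δ) ≤ ‖f - T_δ f‖ ≤ 2 K₁(f, δ). -/

import Mathlib

/-!
Upper bound: for an admissible `g`, `f - T_δ f = (f - g) - T_δ (f - g) + (g - T_δ g)`, where
`T_δ` is a contraction in the sup norm and `|g - T_δ g| ≤ δ ‖g'‖`.

Lower bound: `g = T_δ f` has derivative `(f(· + δ) - f) / δ`, so it suffices to show
`D := ‖f(· + δ) - f‖ ≤ 12 E` with `E := ‖f - T_δ f‖`. The derivative of `G = T_δ² f` is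
`T_δ (f(· + δ) - f) / δ`, which is Lipschitz with constant `2D / δ²`. A second-order expansion
gives `T_δ G - G = (δ / 2) G'` up to an error of at most `D / 3`; with `‖G - T_δ G‖ ≤ E` this
bounds the increments of `T_δ f` by `2E + 2D / 3`, hence `D ≤ 4E + 2D / 3`.
-/

/-- Forward Steklov operator `T_δ f(x) = (1/δ) ∫₀^δ f(x+t) dt`. -/
noncomputable def steklov (δ : ℝ) (f : ℝ → ℝ) : ℝ → ℝ :=
  fun x => (1 / δ) * ∫ t in (0:ℝ)..δ, f (x + t)

/-- Peetre K-functional of order 1 (sup norm), taken over C¹ functions `g`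
with `g` and `g'` bounded. -/
noncomputable def K1 (δ : ℝ) (f : ℝ → ℝ) : ℝ :=
  sInf {c : ℝ | ∃ g : ℝ → ℝ, ContDiff ℝ 1 g ∧
    BddAbove (Set.range fun x => |g x|) ∧
    BddAbove (Set.range fun x => |deriv g x|) ∧
    c = (⨆ x, |f x - g x|) + δ * ⨆ x, |deriv g x|}

open MeasureTheory intervalIntegral Set

section Steklov

variable {δ C : ℝ} {f g : ℝ → ℝ}

theorem abs_average_le (hδ : 0 < δ) {φ : ℝ → ℝ} (h : ∀ t ∈ Ioc 0 δ, |φ t| ≤ C) :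
    |1 / δ * ∫ t in (0:ℝ)..δ, φ t| ≤ C := by
  have hint := norm_integral_le_of_norm_le_const (a := 0) (b := δ) (C := C) (f := φ)
    (by simpa [uIoc_of_le hδ.le] using h)
  rw [Real.norm_eq_abs, sub_zero, abs_of_pos hδ] at hint
  rw [abs_mul, abs_of_pos (one_div_pos.2 hδ)]
  calc 1 / δ * |∫ t in (0:ℝ)..δ, φ t| ≤ 1 / δ * (C * δ) := by gcongr
    _ = C := by field_simp

theorem abs_steklov_le (hδ : 0 < δ) (hC : ∀ y, |f y| ≤ C) (x : ℝ) : |steklov δ f x| ≤ C :=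
  abs_average_le hδ fun t _ => hC (x + t)

theorem steklov_sub (hf : Continuous f) (hg : Continuous g) :
    steklov δ (f - g) = steklov δ f - steklov δ g := by
  ext x
  simp only [steklov, Pi.sub_apply, ← mul_sub]
  rw [integral_sub ((by fun_prop : Continuous fun t => f (x + t)).intervalIntegrable _ _)
    ((by fun_prop : Continuous fun t => g (x + t)).intervalIntegrable _ _)]

theorem steklov_comp_add_right (a : ℝ) :
    steklov δ (fun y => f (y + a)) = fun x => steklov δ f (x + a) := by
  ext x
  simp only [steklov, add_right_comm x]

theorem abs_steklov_sub_steklov_le (hδ : 0 < δ) (hf : Continuous f) (hg : Continuous g)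
    (h : ∀ y, |f y - g y| ≤ C) (x : ℝ) : |steklov δ f x - steklov δ g x| ≤ C := by
  rw [← Pi.sub_apply (steklov δ f), ← steklov_sub hf hg]
  exact abs_steklov_le hδ h x

theorem steklov_sub_self (hf : Continuous f) (hδ : δ ≠ 0) (x : ℝ) :
    steklov δ f x - f x = 1 / δ * ∫ t in (0:ℝ)..δ, (f (x + t) - f x) := by
  rw [integral_sub ((by fun_prop : Continuous fun t => f (x + t)).intervalIntegrable _ _)
    intervalIntegrable_const, intervalIntegral.integral_const, smul_eq_mul, sub_zero,
    mul_sub, steklov]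
  field_simp

theorem hasDerivAt_steklov (hf : Continuous f) (x : ℝ) :
    HasDerivAt (steklov δ f) ((f (x + δ) - f x) / δ) x := by
  have hF : ∀ y, HasDerivAt (fun y => ∫ u in (0:ℝ)..y, f u) (f y) y :=
    fun y => (hf.integral_hasStrictDerivAt 0 y).hasDerivAt
  have heq : steklov δ f =
      fun y => 1 / δ * ((∫ u in (0:ℝ)..y + δ, f u) - ∫ u in (0:ℝ)..y, f u) := by
    ext y
    rw [steklov, integral_comp_add_left, add_zero,
      integral_interval_sub_left (hf.intervalIntegrable _ _) (hf.intervalIntegrable _ _)]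
  rw [heq]
  exact ((((hF (x + δ)).comp_add_const x δ).sub (hF x)).const_mul (1 / δ)).congr_deriv
    (by ring)

theorem continuous_steklov (hf : Continuous f) : Continuous (steklov δ f) :=
  continuous_iff_continuousAt.2 fun x => (hasDerivAt_steklov hf x).continuousAt

theorem deriv_steklov (hf : Continuous f) :
    deriv (steklov δ f) = fun x => (f (x + δ) - f x) / δ :=
  funext fun x => (hasDerivAt_steklov hf x).deriv

theorem contDiff_steklov (hf : Continuous f) : ContDiff ℝ 1 (steklov δ f) := by
  rw [contDiff_one_iff_deriv, deriv_steklov hf]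
  exact ⟨fun x => (hasDerivAt_steklov hf x).differentiableAt,
    ((hf.comp (continuous_add_const δ)).sub hf).div_const δ⟩

theorem abs_sub_le_mul_of_abs_deriv_le (hf : Differentiable ℝ f) (hC : ∀ y, |deriv f y| ≤ C)
    (s t : ℝ) : |f s - f t| ≤ C * |s - t| := by
  simpa only [Real.norm_eq_abs] using convex_univ.norm_image_sub_le_of_norm_deriv_le
    (fun y _ => hf y) (fun y _ => hC y) (mem_univ t) (mem_univ s)

end Steklov

section Taylor

variable {δ L : ℝ} {G G' : ℝ → ℝ}

theorem abs_sub_sub_mul_le_of_lipschitz_deriv (hG : ∀ y, HasDerivAt G (G' y) y)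
    (hL : ∀ s t, |G' s - G' t| ≤ L * |s - t|) (x : ℝ) {s : ℝ} (hs : 0 ≤ s) :
    |G (x + s) - G x - s * G' x| ≤ L / 2 * s ^ 2 := by
  have hψ : ∀ u, HasDerivAt (fun u => G (x + u) - G x - u * G' x) (G' (x + u) - G' x) u :=
    fun u => (((hG (x + u)).comp_const_add x u).sub_const _).sub
      (by simpa using (hasDerivAt_id u).mul_const (G' x))
  have hB : ∀ u, HasDerivAt (fun u => L / 2 * u ^ 2) (L * u) u := fun u => by
    simpa using ((hasDerivAt_pow 2 u).const_mul (L / 2)).congr_deriv (by ring)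
  refine image_norm_le_of_norm_deriv_right_le_deriv_boundary
    (fun u _ => (hψ u).continuousAt.continuousWithinAt) (fun u _ => (hψ u).hasDerivWithinAt)
    (by simp) hB (fun u hu => ?_) ⟨hs, le_rfl⟩
  simpa [Real.norm_eq_abs, abs_of_nonneg hu.1] using hL (x + u) x

theorem abs_steklov_sub_sub_le (hδ : 0 < δ) (hG : ∀ y, HasDerivAt G (G' y) y)
    (hL : ∀ s t, |G' s - G' t| ≤ L * |s - t|) (x : ℝ) :
    |steklov δ G x - G x - δ / 2 * G' x| ≤ L * δ ^ 2 / 6 := by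
  have hGc : Continuous G := continuous_iff_continuousAt.2 fun y => (hG y).continuousAt
  have hψc : Continuous fun t => G (x + t) - G x - t * G' x := by fun_prop
  have heq : steklov δ G x - G x - δ / 2 * G' x =
      1 / δ * ∫ t in (0:ℝ)..δ, (G (x + t) - G x - t * G' x) := by
    rw [steklov_sub_self hGc hδ.ne', integral_sub
      ((by fun_prop : Continuous fun t => G (x + t) - G x).intervalIntegrable _ _)
      ((by fun_prop : Continuous fun t => t * G' x).intervalIntegrable _ _),
      intervalIntegral.integral_mul_const, integral_id]
    field_simp
    ring
  have hint : ∫ t in (0:ℝ)..δ, |G (x + t) - G x - t * G' x| ≤ L * δ ^ 3 / 6 :=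
    calc ∫ t in (0:ℝ)..δ, |G (x + t) - G x - t * G' x|
        ≤ ∫ t in (0:ℝ)..δ, L / 2 * t ^ 2 :=
          integral_mono_on hδ.le (hψc.abs.intervalIntegrable _ _)
            ((by fun_prop : Continuous fun t : ℝ => L / 2 * t ^ 2).intervalIntegrable _ _)
            fun t ht => abs_sub_sub_mul_le_of_lipschitz_deriv hG hL x ht.1
      _ = L * δ ^ 3 / 6 := by
          rw [intervalIntegral.integral_const_mul, integral_pow]
          ring
  rw [heq, abs_mul, abs_of_pos (one_div_pos.2 hδ)]
  calc 1 / δ * |∫ t in (0:ℝ)..δ, (G (x + t) - G x - t * G' x)|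
      ≤ 1 / δ * (L * δ ^ 3 / 6) := by
        gcongr
        exact (abs_integral_le_integral_abs hδ.le).trans hint
    _ = L * δ ^ 2 / 6 := by field_simp

end Taylor

section Shift

variable {δ A B C D E M : ℝ} {f p : ℝ → ℝ}

theorem abs_steklov_sub_steklov_le_mul (hδ : 0 < δ) (hf : Continuous f) (hC : ∀ y, |f y| ≤ C)
    (s t : ℝ) : |steklov δ f s - steklov δ f t| ≤ 2 * C / δ * |s - t| := by
  refine abs_sub_le_mul_of_abs_deriv_le (fun y => (hasDerivAt_steklov hf y).differentiableAt)
    (fun y => ?_) s t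
  rw [deriv_steklov hf, abs_div, abs_of_pos hδ]
  gcongr
  linarith [abs_sub (f (y + δ)) (f y), hC (y + δ), hC y]

theorem abs_steklov_shift_le (hδ : 0 < δ) (hf : Continuous f)
    (hD : ∀ y, |f (y + δ) - f y| ≤ D) (hE : ∀ y, |f y - steklov δ f y| ≤ E) (x : ℝ) :
    |steklov δ f (x + δ) - steklov δ f x| ≤ 2 * E + 2 / 3 * D := by
  set g := steklov δ f
  have hg : Continuous g := continuous_steklov hf
  have hdiff : ∀ y, g (y + δ) - g y = steklov δ (fun y => f (y + δ) - f y) y := fun y => by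
    rw [show (fun y => f (y + δ) - f y) = (fun y => f (y + δ)) - f from rfl,
      steklov_sub (by fun_prop) hf, steklov_comp_add_right]
    rfl
  have hL : ∀ s t, |(g (s + δ) - g s) / δ - (g (t + δ) - g t) / δ| ≤ 2 * D / δ / δ * |s - t| :=
    fun s t => by
      rw [hdiff, hdiff, ← sub_div, abs_div, abs_of_pos hδ, div_mul_eq_mul_div]
      gcongr
      exact abs_steklov_sub_steklov_le_mul hδ (by fun_prop) hD s t
  have htaylor := abs_le.1 (abs_steklov_sub_sub_le hδ (hasDerivAt_steklov hg) hL x)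
  have hmean := abs_le.1 <| abs_steklov_sub_steklov_le hδ hg (continuous_steklov hg)
    (abs_steklov_sub_steklov_le hδ hf hg hE) x
  have hD3 : 2 * D / δ / δ * δ ^ 2 / 6 = D / 3 := by field_simp; ring
  have hq : δ / 2 * ((g (x + δ) - g x) / δ) = (g (x + δ) - g x) / 2 := by field_simp
  rw [hD3, hq] at htaylor
  rw [abs_le]
  constructor <;> linarith [htaylor.1, htaylor.2, hmean.1, hmean.2]

theorem abs_shift_le_of_abs_sub_steklov_le (hδ : 0 < δ) (hf : Continuous f)
    (hM : ∀ y, |f y| ≤ M) (hE : ∀ y, |f y - steklov δ f y| ≤ E) (x : ℝ) :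
    |f (x + δ) - f x| ≤ 12 * E := by
  have hbdd : BddAbove (range fun y => |f (y + δ) - f y|) :=
    ⟨2 * M, forall_mem_range.2 fun y => by linarith [abs_sub (f (y + δ)) (f y), hM (y + δ), hM y]⟩
  set D := ⨆ y, |f (y + δ) - f y|
  have hD : ∀ y, |f (y + δ) - f y| ≤ D := le_ciSup hbdd
  have hD' : D ≤ 4 * E + 2 / 3 * D := ciSup_le fun y => by
    have hsplit : f (y + δ) - f y = (f (y + δ) - steklov δ f (y + δ))
        + (steklov δ f (y + δ) - steklov δ f y) + (steklov δ f y - f y) := by ring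
    rw [hsplit]
    refine (abs_add_three _ _ _).trans ?_
    linarith [hE (y + δ), abs_sub_comm (f y) (steklov δ f y) ▸ hE y,
      abs_steklov_shift_le hδ hf hD hE y]
  linarith [hD x]

theorem abs_sub_steklov_le_of_abs_deriv_le (hδ : 0 < δ) (hp : Differentiable ℝ p)
    (hC : ∀ y, |deriv p y| ≤ C) (x : ℝ) : |p x - steklov δ p x| ≤ δ * C := by
  have hC₀ : 0 ≤ C := (abs_nonneg _).trans (hC 0)
  rw [abs_sub_comm, steklov_sub_self hp.continuous hδ.ne']
  refine abs_average_le hδ fun t ht => ?_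
  calc |p (x + t) - p x| ≤ C * |x + t - x| := abs_sub_le_mul_of_abs_deriv_le hp hC _ _
    _ = C * t := by rw [add_sub_cancel_left, abs_of_pos ht.1]
    _ ≤ δ * C := by nlinarith [ht.2]

theorem abs_sub_steklov_le_of_approx (hδ : 0 < δ) (hf : Continuous f) (hp : Differentiable ℝ p)
    (hA : ∀ y, |f y - p y| ≤ A) (hB : ∀ y, |deriv p y| ≤ B) (x : ℝ) :
    |f x - steklov δ f x| ≤ 2 * A + δ * B := by
  have hsplit : f x - steklov δ f x = (f x - p x) + (steklov δ p x - steklov δ f x)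
      + (p x - steklov δ p x) := by ring
  rw [hsplit]
  refine (abs_add_three _ _ _).trans ?_
  linarith [hA x, abs_sub_comm (steklov δ f x) (steklov δ p x) ▸
      abs_steklov_sub_steklov_le hδ hf hp.continuous hA x,
    abs_sub_steklov_le_of_abs_deriv_le hδ hp hB x]

end Shift

section KFunctional

variable {δ c : ℝ} {f g : ℝ → ℝ}

theorem K1_le (hδ : 0 ≤ δ) (hg : ContDiff ℝ 1 g) (hg₀ : BddAbove (range fun x => |g x|))
    (hg₁ : BddAbove (range fun x => |deriv g x|)) :
    K1 δ f ≤ (⨆ x, |f x - g x|) + δ * ⨆ x, |deriv g x| := by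
  refine csInf_le ⟨0, ?_⟩ ⟨g, hg, hg₀, hg₁, rfl⟩
  rintro _ ⟨p, -, -, -, rfl⟩
  exact add_nonneg (Real.iSup_nonneg fun _ => abs_nonneg _)
    (mul_nonneg hδ (Real.iSup_nonneg fun _ => abs_nonneg _))

theorem le_K1 (h : ∀ g : ℝ → ℝ, ContDiff ℝ 1 g → BddAbove (range fun x => |g x|) →
      BddAbove (range fun x => |deriv g x|) → c ≤ (⨆ x, |f x - g x|) + δ * ⨆ x, |deriv g x|) :
    c ≤ K1 δ f := by
  refine le_csInf ⟨_, 0, contDiff_const, by simp, by simp, rfl⟩ ?_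
  rintro _ ⟨g, hg, hg₀, hg₁, rfl⟩
  exact h g hg hg₀ hg₁

end KFunctional

theorem K1_equiv (f : ℝ → ℝ) (hf : Continuous f)
    (hb : BddAbove (Set.range fun x => |f x|)) (δ : ℝ) (hδ : 0 < δ) :
    (1 / 36) * K1 δ f ≤ (⨆ x, |f x - steklov δ f x|) ∧
    (⨆ x, |f x - steklov δ f x|) ≤ 2 * K1 δ f := by
  obtain ⟨M, hM⟩ := hb
  replace hM : ∀ x, |f x| ≤ M := fun x => hM ⟨x, rfl⟩
  have hbdd : ∀ {p : ℝ → ℝ} {P : ℝ}, (∀ x, |p x| ≤ P) → BddAbove (range fun x => |f x - p x|) :=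
    fun hP => ⟨M + _, forall_mem_range.2 fun x => (abs_sub _ _).trans (add_le_add (hM x) (hP x))⟩
  set E := ⨆ x, |f x - steklov δ f x|
  have hE : ∀ x, |f x - steklov δ f x| ≤ E := le_ciSup (hbdd (abs_steklov_le hδ hM))
  have hE₀ : 0 ≤ E := (abs_nonneg _).trans (hE 0)
  constructor
  · have hderiv : ∀ x, |deriv (steklov δ f) x| ≤ 12 * E / δ := fun x => by
      rw [deriv_steklov hf, abs_div, abs_of_pos hδ]
      gcongr
      exact abs_shift_le_of_abs_sub_steklov_le hδ hf hM hE x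
    have hK := K1_le (f := f) hδ.le (contDiff_steklov hf)
      ⟨M, forall_mem_range.2 (abs_steklov_le hδ hM)⟩ ⟨_, forall_mem_range.2 hderiv⟩
    have hδE : δ * ⨆ x, |deriv (steklov δ f) x| ≤ 12 * E :=
      calc _ ≤ δ * (12 * E / δ) := by gcongr; exact ciSup_le hderiv
        _ = 12 * E := by field_simp
    linarith
  · have hK : E / 2 ≤ K1 δ f := le_K1 fun p hp ⟨P, hP⟩ hp₁ => by
      have hE' := ciSup_le (abs_sub_steklov_le_of_approx hδ hf (hp.differentiable one_ne_zero)
        (le_ciSup (hbdd fun x => hP ⟨x, rfl⟩)) (le_ciSup hp₁))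
      have hδB : 0 ≤ δ * ⨆ x, |deriv p x| :=
        mul_nonneg hδ.le (Real.iSup_nonneg fun _ => abs_nonneg _)
      linarith
    linarith
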